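/- arXiv:2506.11265 — 2 statements merged into one kernel-verified Lean document; each statement's English description precedes it below -/
import Mathlib

section
/- Let 𝓜 be an (n,d)-matching ensemble and let 𝒯 = {T_v} be an extended (n,d)-tope arrangement each of whose topes is compatible with every matching of 𝓜 (such a 𝒯 exists and is unique, being obtained from 𝓜 by iterated amalgamation). Then for every lattice point w of (n+1)Δ^{d−1}, the union ⋃_{j̄ ∈ supp(w)} T_{w−e_j̄}, where supp(w) = {j̄ ∈ [d̄] : w_j̄ ≥ 1}, is a tree on the vertex set [n] ⊔ supp(w) in which every vertex of [n] has degree 1 or 2. -/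
open Finset

/-- A bipartite graph between `α` and `β`, identified with its edge set. -/
abbrev BGraph (α β : Type*) := Finset (α × β)

section BipartiteDefs

variable {α β : Type*} [DecidableEq α] [DecidableEq β]

/-- Left degree vector. -/
def LD (G : BGraph α β) (a : α) : ℕ := (G.filter fun e => e.1 = a).card

/-- Right degree vector. -/
def RD (G : BGraph α β) (b : β) : ℕ := (G.filter fun e => e.2 = b).card

/-- The simple graph on `α ⊕ β` associated to a bipartite edge set. -/
def toGraph (G : BGraph α β) : SimpleGraph (α ⊕ β) :=
  SimpleGraph.fromRel fun x y => ∃ a b, x = Sum.inl a ∧ y = Sum.inr b ∧ (a, b) ∈ G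

/-- Acyclicity of a bipartite edge set. -/
def Acyclic (G : BGraph α β) : Prop := (toGraph G).IsAcyclic

/-- `U` is a tree on the vertex set `I ⊔ J`. -/
def IsTreeOn (U : BGraph α β) (I : Finset α) (J : Finset β) : Prop :=
  (∀ e ∈ U, e.1 ∈ I ∧ e.2 ∈ J) ∧ Acyclic U ∧
    ∀ x y : α ⊕ β, Sum.elim (· ∈ I) (· ∈ J) x → Sum.elim (· ∈ I) (· ∈ J) y →
      (toGraph U).Reachable x y

/-- `M` is a perfect matching between `I` and `J`. -/
def IsMatching (M : BGraph α β) (I : Finset α) (J : Finset β) : Prop :=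
  (∀ e ∈ M, e.1 ∈ I ∧ e.2 ∈ J) ∧ (∀ a ∈ I, ∃! b : β, (a, b) ∈ M) ∧
    ∀ b ∈ J, ∃! a : α, (a, b) ∈ M

/-- Compatibility of two bipartite graphs. -/
def Compatible (G G' : BGraph α β) : Prop :=
  ∀ (I : Finset α) (J : Finset β) (M M' : BGraph α β),
    M ⊆ G → M' ⊆ G' → IsMatching M I J → IsMatching M' I J → M = M'

end BipartiteDefs

section TopeDefs

variable {n d : ℕ}

/-- The graph of a tope `T : [n] → [d]`. -/
def topeGraph (T : Fin n → Fin d) : BGraph (Fin n) (Fin d) :=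
  Finset.univ.image fun i => (i, T i)

/-- The position (right degree vector) of a tope. -/
def topePos (T : Fin n → Fin d) : Fin d → ℕ :=
  fun j => (Finset.univ.filter fun i => T i = j).card

/-- Standard unit vector `e_j`. -/
def unitVec (j : Fin d) : Fin d → ℕ := fun k => if k = j then 1 else 0

end TopeDefs

/-- Support of a vector. -/
def suppF {d : ℕ} (w : Fin d → ℕ) : Finset (Fin d) :=
  Finset.univ.filter fun j => 1 ≤ w j

/-- The union of the topes at the vertices of the upside-down simplex `w + ∇^{d-1}`. -/
def nablaUnion {n d : ℕ} (T : (Fin d → ℕ) → Fin n → Fin d) (w : Fin d → ℕ) :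
    BGraph (Fin n) (Fin d) :=
  (suppF w).biUnion fun j => topeGraph (T (w - unitVec j))

/-- An `(n,d)`-matching ensemble (as a normalized matching stack). -/
structure MatchingEnsemble (n d : ℕ) where
  M : Finset (Fin n) → Finset (Fin d) → BGraph (Fin n) (Fin d)
  matching : ∀ I J, I.card = J.card → IsMatching (M I J) I J
  junk : ∀ I J, I.card ≠ J.card → M I J = ∅
  closure : ∀ (I : Finset (Fin n)) (J : Finset (Fin d)) (I' : Finset (Fin n))
    (J' : Finset (Fin d)) (N : BGraph (Fin n) (Fin d)), I.card = J.card → I' ⊆ I → J' ⊆ J →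
    N ⊆ M I J → IsMatching N I' J' → N = M I' J'
  leftLinkage : ∀ (I : Finset (Fin n)) (J : Finset (Fin d)), I.card = J.card + 1 →
    IsTreeOn (I.biUnion fun i => M (I.erase i) J) I J ∧
      ∀ j ∈ J, RD (I.biUnion fun i => M (I.erase i) J) j = 2
  rightLinkage : ∀ (I : Finset (Fin n)) (J : Finset (Fin d)), I.card + 1 = J.card →
    IsTreeOn (J.biUnion fun j => M I (J.erase j)) I J ∧
      ∀ i ∈ I, LD (J.biUnion fun j => M I (J.erase j)) i = 2


/-!
Restrict the topes `T_{w - e_j}` to a set `I` of left vertices, keeping `|w| = |I| + 1`. If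
some `w_c ≥ 2`, all these topes send a common `i ∈ I` to `c`: two compatible topes whose
positions differ by moving one unit onto `c` cannot disagree on an `i` that the first sends to
`c`, since the disagreements would form an alternating cycle, i.e. two different perfect
matchings on the same vertex sets. Then `(i, c)` is a leaf of the union and we remove `i`
and one unit of `w_c`. If `w` is a `0/1` vector, each restricted tope is a perfect matching of
`I` with `supp w ∖ {j}`, hence the ensemble's own matching, and right linkage says that their
union is a tree in which every `i ∈ I` has degree 2.
-/

lemma SimpleGraph.IsIsolated.eq_of_reachable {V : Type*} {G : SimpleGraph V} {v w : V}
    (h : G.IsIsolated v) (hr : G.Reachable v w) : v = w := by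
  obtain ⟨p⟩ := hr
  cases p with
  | nil => rfl
  | cons hadj _ => exact absurd hadj (h _)

section Bipartite

variable {α β : Type*}

lemma toGraph_adj (U : BGraph α β) (x y : α ⊕ β) :
    (toGraph U).Adj x y ↔
      ∃ a b, (a, b) ∈ U ∧ ((x = .inl a ∧ y = .inr b) ∨ (x = .inr b ∧ y = .inl a)) := by
  simp only [toGraph, SimpleGraph.fromRel_adj]
  constructor
  · rintro ⟨-, ⟨a, b, rfl, rfl, h⟩ | ⟨a, b, rfl, rfl, h⟩⟩ <;> exact ⟨a, b, h, by simp⟩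
  · rintro ⟨a, b, h, ⟨rfl, rfl⟩ | ⟨rfl, rfl⟩⟩ <;> simp [h]

lemma isIsolated_toGraph {U : BGraph α β} {a : α} (h : ∀ e ∈ U, e.1 ≠ a) :
    (toGraph U).IsIsolated (.inl a) := by
  intro y hy
  obtain ⟨a', b', he, ⟨hx, -⟩ | ⟨hx, -⟩⟩ := (toGraph_adj U _ _).1 hy
  · exact h _ he (Sum.inl.inj hx).symm
  · exact Sum.inl_ne_inr hx

lemma Compatible.mono {G G' H H' : BGraph α β} (h : Compatible G G') (hH : H ⊆ G)
    (hH' : H' ⊆ G') : Compatible H H' :=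
  fun I J M M' hM hM' => h I J M M' (hM.trans hH) (hM'.trans hH')

section DecidableEq

variable [DecidableEq β]

/-- `topePos T` is `posOn univ T`. -/
def posOn (I : Finset α) (f : α → β) (b : β) : ℕ :=
  (I.filter fun i => f i = b).card

lemma exists_arc_out_of_posOn_le {I : Finset α} {t t' : α → β} {b : β}
    (hle : posOn I t' b ≤ posOn I t b) (hin : ∃ i ∈ I, t' i = b ∧ t i ≠ b) :
    ∃ i ∈ I, t i = b ∧ t' i ≠ b := by
  by_contra! hout
  obtain ⟨i, hi, hti', hti⟩ := hin
  have hssub : (I.filter fun i => t i = b) ⊂ I.filter fun i => t' i = b := by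
    refine Finset.ssubset_iff_subset_ne.2 ⟨fun x hx => ?_, fun heq => ?_⟩
    · rw [mem_filter] at hx ⊢
      exact ⟨hx.1, hout x hx.1 hx.2⟩
    · have : i ∈ I.filter fun i => t i = b := heq ▸ mem_filter.2 ⟨hi, hti'⟩
      exact hti (mem_filter.1 this).2
  exact absurd (card_lt_card hssub) (not_lt.2 hle)

variable [DecidableEq α]

lemma toGraph_insert (U : BGraph α β) (a : α) (b : β) :
    toGraph (insert (a, b) U) = toGraph U ⊔ SimpleGraph.edge (.inl a) (.inr b) := by
  ext x y
  simp only [SimpleGraph.sup_adj, SimpleGraph.edge_adj, toGraph_adj, mem_insert, Prod.mk.injEq]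
  aesop

theorem IsTreeOn.insert_leaf {U : BGraph α β} {I : Finset α} {J : Finset β} {a : α} {b : β}
    (ha : a ∉ I) (hb : b ∈ J) (hU : IsTreeOn U I J) :
    IsTreeOn (insert (a, b) U) (insert a I) J := by
  obtain ⟨hedge, hacyc, hreach⟩ := hU
  have hiso : (toGraph U).IsIsolated (.inl a) :=
    isIsolated_toGraph fun e he hea => ha (hea ▸ (hedge e he).1)
  have hadj_ab :
      (SimpleGraph.edge (.inl a) (.inr b) : SimpleGraph (α ⊕ β)).Adj (.inl a) (.inr b) := by
    simp [SimpleGraph.edge_adj]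
  refine ⟨?_, ?_, ?_⟩
  · intro e he
    rcases mem_insert.1 he with rfl | he
    · exact ⟨mem_insert_self a I, hb⟩
    · exact ⟨mem_insert_of_mem (hedge e he).1, (hedge e he).2⟩
  · rw [Acyclic, toGraph_insert]
    exact hacyc.sup_edge_of_not_reachable fun hr => Sum.inl_ne_inr (hiso.eq_of_reachable hr)
  · rw [toGraph_insert]
    have to_b : ∀ x, Sum.elim (· ∈ insert a I) (· ∈ J) x →
        (toGraph U ⊔ SimpleGraph.edge (.inl a) (.inr b)).Reachable x (.inr b) := by
      rintro (x | x) hx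
      · rcases mem_insert.1 hx with rfl | hx
        · exact (hadj_ab.reachable).mono le_sup_right
        · exact (hreach (.inl x) (.inr b) hx hb).mono le_sup_left
      · exact (hreach (.inr x) (.inr b) hx hb).mono le_sup_left
    exact fun x y hx hy => (to_b x hx).trans (to_b y hy).symm

lemma LD_insert_self {U : BGraph α β} {a : α} (b : β) (h : ∀ e ∈ U, e.1 ≠ a) :
    LD (insert (a, b) U) a = 1 := by
  rw [LD, filter_insert, if_pos rfl, filter_false_of_mem h]
  rfl

lemma LD_insert_of_ne {U : BGraph α β} {a i : α} (b : β) (h : i ≠ a) :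
    LD (insert (a, b) U) i = LD U i := by
  simp [LD, filter_insert, Ne.symm h]

/-- `topeGraph T` is `restGraph univ T`. -/
def restGraph (I : Finset α) (f : α → β) : BGraph α β :=
  I.image fun i => (i, f i)

lemma mem_restGraph {I : Finset α} {f : α → β} {e : α × β} :
    e ∈ restGraph I f ↔ e.1 ∈ I ∧ f e.1 = e.2 := by
  simp only [restGraph, mem_image]
  constructor
  · rintro ⟨i, hi, rfl⟩
    exact ⟨hi, rfl⟩
  · rintro ⟨h1, h2⟩
    exact ⟨e.1, h1, by rw [h2]⟩

lemma restGraph_mono {I I' : Finset α} (h : I' ⊆ I) (f : α → β) :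
    restGraph I' f ⊆ restGraph I f :=
  image_subset_image h

lemma isMatching_restGraph {I : Finset α} {f : α → β} (hf : Set.InjOn f I) :
    IsMatching (restGraph I f) I (I.image f) := by
  refine ⟨fun e he => ?_, fun a ha => ?_, fun b hb => ?_⟩
  · obtain ⟨h1, h2⟩ := mem_restGraph.1 he
    exact ⟨h1, mem_image.2 ⟨e.1, h1, h2⟩⟩
  · exact ⟨f a, mem_restGraph.2 ⟨ha, rfl⟩, fun b hb => (mem_restGraph.1 hb).2.symm⟩
  · obtain ⟨a, ha, rfl⟩ := mem_image.1 hb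
    exact ⟨a, mem_restGraph.2 ⟨ha, rfl⟩, fun a' ha' =>
      hf (mem_restGraph.1 ha').1 ha (mem_restGraph.1 ha').2⟩

lemma eqOn_of_compatible {I Q : Finset α} {t t' : α → β}
    (hcomp : Compatible (restGraph I t) (restGraph I t')) (hQ : Q ⊆ I)
    (ht : Set.InjOn t Q) (ht' : Set.InjOn t' Q) (himage : Q.image t = Q.image t') :
    Set.EqOn t t' Q := by
  intro i hi
  have hmatch' := isMatching_restGraph ht'
  rw [← himage] at hmatch'
  have heq := hcomp Q (Q.image t) _ _ (restGraph_mono hQ t) (restGraph_mono hQ t')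
    (isMatching_restGraph ht) hmatch'
  have hmem : (i, t i) ∈ restGraph Q t' := heq ▸ mem_restGraph.2 ⟨hi, rfl⟩
  exact (mem_restGraph.1 hmem).2.symm

def unionOn {ι : Type*} (I : Finset α) (t : ι → α → β)
    (S : Finset ι) : BGraph α β :=
  S.biUnion fun j => restGraph I (t j)

lemma unionOn_eq_insert {ι : Type*} {I : Finset α}
    {t : ι → α → β} {S : Finset ι} {a : α} {c : β} (hS : S.Nonempty) (ha : a ∈ I)
    (hleaf : ∀ j ∈ S, t j a = c) :
    unionOn I t S = insert (a, c) (unionOn (I.erase a) t S) := by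
  obtain ⟨k, hk⟩ := hS
  ext ⟨i, b⟩
  simp only [unionOn, mem_insert, mem_biUnion, mem_restGraph, mem_erase, Prod.mk.injEq]
  constructor
  · rintro ⟨j, hj, hi, rfl⟩
    by_cases hia : i = a
    · subst hia
      exact .inl ⟨rfl, hleaf j hj⟩
    · exact .inr ⟨j, hj, ⟨hia, hi⟩, rfl⟩
  · rintro (⟨rfl, rfl⟩ | ⟨j, hj, ⟨-, hi⟩, rfl⟩)
    · exact ⟨k, hk, ha, hleaf k hk⟩
    · exact ⟨j, hj, hi, rfl⟩

lemma Finset.exists_nonempty_subset_image_eq {S : Finset α} (hS : S.Nonempty) (g : α → α)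
    (hg : ∀ a ∈ S, g a ∈ S) : ∃ O ⊆ S, O.Nonempty ∧ O.image g = O := by
  induction S using Finset.strongInduction with
  | H S ih =>
  by_cases h : S.image g = S
  · exact ⟨S, subset_rfl, hS, h⟩
  · have hsub : S.image g ⊂ S := ssubset_of_subset_of_ne (image_subset_iff.2 hg) h
    obtain ⟨O, hO, hne, himage⟩ := ih _ hsub (hS.image g)
      fun a ha => mem_image_of_mem g (hsub.subset ha)
    exact ⟨O, hO.trans hsub.subset, hne, himage⟩

/-- Consider the arcs `t i → t' i` between colours, for `t i ≠ t' i`. By `hle` every colour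
they enter is also left, and if `t' a ≠ c` so is `c`; hence they contain a cycle, which gives two
distinct perfect matchings between the same vertex sets. -/
theorem apply_eq_of_compatible {I : Finset α} {t t' : α → β} {c : β}
    (hcomp : Compatible (restGraph I t) (restGraph I t'))
    (hle : ∀ b ≠ c, posOn I t' b ≤ posOn I t b) {a : α} (ha : a ∈ I) (hc : t a = c) :
    t' a = c := by
  by_contra hne
  set S := (I.filter fun i => t i ≠ t' i).image t
  have hmemS : ∀ b, b ∈ S ↔ ∃ i ∈ I, t i = b ∧ t' i ≠ b := by
    intro b
    simp only [S, mem_image, mem_filter]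
    constructor
    · rintro ⟨i, ⟨hi, hne⟩, rfl⟩
      exact ⟨i, hi, rfl, Ne.symm hne⟩
    · rintro ⟨i, hi, rfl, hne⟩
      exact ⟨i, ⟨hi, Ne.symm hne⟩, rfl⟩
  have hcS : c ∈ S := (hmemS c).2 ⟨a, ha, hc, hne⟩
  have hclosed : ∀ i ∈ I, t i ≠ t' i → t' i ∈ S := by
    intro i hi hti
    by_cases hic : t' i = c
    · exact hic ▸ hcS
    · exact (hmemS _).2 (exists_arc_out_of_posOn_le (hle _ hic) ⟨i, hi, rfl, hti⟩)
  have harc : ∀ b ∈ S, ∃ i ∈ I, t i = b ∧ t' i ≠ b := fun b hb => (hmemS b).1 hb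
  have : Nonempty α := ⟨a⟩
  choose! σ hσI hσt hσt' using harc
  -- `σ b` is an arc leaving `b`; on a set `O` of colours with `g O = O`, where
  -- `g b = t' (σ b)`, these arcs form disjoint cycles.
  obtain ⟨O, hOS, ⟨b, hb⟩, hO⟩ := exists_nonempty_subset_image_eq ⟨c, hcS⟩ (fun b => t' (σ b))
    fun b hb => hclosed _ (hσI b hb) (by rw [hσt b hb]; exact (hσt' b hb).symm)
  set Q := O.image σ
  have hσinj : Set.InjOn σ O := fun x hx y hy hxy => by
    rw [← hσt x (hOS hx), ← hσt y (hOS hy), hxy]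
  have htQ : Q.image t = O := by
    rw [image_image]
    exact (image_congr fun x hx => hσt x (hOS hx)).trans image_id
  have ht'Q : Q.image t' = O := by rwa [image_image]
  have hQcard : Q.card = O.card := card_image_of_injOn hσinj
  have hinj : Set.InjOn t Q := card_image_iff.1 (htQ ▸ hQcard.symm)
  have hinj' : Set.InjOn t' Q := card_image_iff.1 (ht'Q ▸ hQcard.symm)
  have hQI : Q ⊆ I := image_subset_iff.2 fun x hx => hσI x (hOS hx)
  have heq := eqOn_of_compatible hcomp hQI hinj hinj' (htQ.trans ht'Q.symm)
    (mem_image_of_mem σ hb)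
  exact hσt' b (hOS hb) (heq ▸ hσt b (hOS hb))

end DecidableEq

end Bipartite

section Simplex

variable {d : ℕ}

lemma mem_suppF {w : Fin d → ℕ} {j : Fin d} : j ∈ suppF w ↔ 1 ≤ w j := by
  simp [suppF]

lemma sub_unitVec_apply (w : Fin d → ℕ) (j y : Fin d) :
    (w - unitVec j) y = w y - if y = j then 1 else 0 := rfl

lemma sum_sub_unitVec {w : Fin d → ℕ} {c : Fin d} (h : 1 ≤ w c) :
    ∑ y, (w - unitVec c) y + 1 = ∑ y, w y := by
  have hunit : ∑ y, unitVec c y = 1 := by simp [unitVec]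
  rw [← hunit, ← sum_add_distrib]
  refine sum_congr rfl fun y _ => ?_
  rw [sub_unitVec_apply, unitVec]
  split_ifs with hy
  · subst hy; omega
  · rfl

lemma suppF_sub_unitVec_of_two_le {w : Fin d → ℕ} {c : Fin d} (h : 2 ≤ w c) :
    suppF (w - unitVec c) = suppF w := by
  ext y
  rw [mem_suppF, mem_suppF, sub_unitVec_apply]
  split_ifs with hy
  · subst hy; omega
  · rfl

lemma suppF_sub_unitVec_of_le_one {w : Fin d → ℕ} {j : Fin d} (h : w j ≤ 1) :
    suppF (w - unitVec j) = (suppF w).erase j := by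
  ext y
  rw [mem_suppF, mem_erase, mem_suppF, sub_unitVec_apply]
  split_ifs with hy
  · subst hy; omega
  · simp [hy]

lemma sum_eq_card_suppF {w : Fin d → ℕ} (h : ∀ y, w y ≤ 1) : ∑ y, w y = (suppF w).card := by
  rw [suppF, card_filter]
  refine sum_congr rfl fun y _ => ?_
  have := h y
  split_ifs <;> omega

variable {α : Type*}

lemma image_eq_suppF_posOn (I : Finset α) (f : α → Fin d) : I.image f = suppF (posOn I f) := by
  ext y
  rw [mem_image, mem_suppF, posOn, Nat.one_le_iff_ne_zero, Ne, card_eq_zero,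
    ← Ne, ← nonempty_iff_ne_empty, filter_nonempty_iff]

lemma injOn_of_posOn_le_one {I : Finset α} {f : α → Fin d} (h : ∀ y, posOn I f y ≤ 1) :
    Set.InjOn f I := fun x hx y hy hxy =>
  card_le_one.1 (h (f y)) x (mem_filter.2 ⟨hx, hxy⟩) y (mem_filter.2 ⟨hy, rfl⟩)

variable [DecidableEq α]

lemma posOn_erase {I : Finset α} {a : α} (ha : a ∈ I) (f : α → Fin d) :
    posOn (I.erase a) f = posOn I f - unitVec (f a) := by
  funext y
  rw [sub_unitVec_apply, posOn, posOn, filter_erase]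
  split_ifs with hy
  · rw [card_erase_of_mem (mem_filter.2 ⟨ha, hy.symm⟩)]
  · rw [erase_eq_of_notMem fun hmem => hy (mem_filter.1 hmem).2.symm, Nat.sub_zero]

end Simplex

section Nabla

variable {n d : ℕ} (E : MatchingEnsemble n d)

/-- The topes `t j` at the vertices `w - e_j`, `j ∈ supp w`, of the upside-down simplex
`w + ∇^{d-1}`, restricted to a set `I` of left vertices with `|w| = |I| + 1`. -/
structure IsNablaFamily (I : Finset (Fin n)) (w : Fin d → ℕ) (t : Fin d → Fin n → Fin d) :
    Prop where
  sum_eq : ∑ j, w j = I.card + 1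
  posOn_eq : ∀ j ∈ suppF w, posOn I (t j) = w - unitVec j
  compatible : ∀ j ∈ suppF w, ∀ k ∈ suppF w, Compatible (restGraph I (t j)) (restGraph I (t k))
  compatible_ensemble : ∀ j ∈ suppF w, ∀ (I' : Finset (Fin n)) (J' : Finset (Fin d)),
    I'.card = J'.card → Compatible (restGraph I (t j)) (E.M I' J')

namespace IsNablaFamily

variable {E} {I : Finset (Fin n)} {w : Fin d → ℕ} {t : Fin d → Fin n → Fin d}

theorem isTreeOn_of_le_one (h : IsNablaFamily E I w t) (hw : ∀ y, w y ≤ 1) :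
    IsTreeOn (unionOn I t (suppF w)) I (suppF w) ∧
      ∀ i ∈ I, LD (unionOn I t (suppF w)) i = 2 := by
  have hmatch : ∀ j ∈ suppF w, restGraph I (t j) = E.M I ((suppF w).erase j) := by
    intro j hj
    have hpos := h.posOn_eq j hj
    have hinj : Set.InjOn (t j) I := injOn_of_posOn_le_one fun y => by
      rw [hpos]
      exact tsub_le_self.trans (hw y)
    have himage : I.image (t j) = (suppF w).erase j := by
      rw [image_eq_suppF_posOn, hpos, suppF_sub_unitVec_of_le_one (hw j)]
    have hcard : I.card = ((suppF w).erase j).card := by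
      rw [← himage, card_image_of_injOn hinj]
    exact h.compatible_ensemble j hj I _ hcard I _ _ _ subset_rfl subset_rfl
      (himage ▸ isMatching_restGraph hinj) (E.matching _ _ hcard)
  have hcard : I.card + 1 = (suppF w).card := by rw [← sum_eq_card_suppF hw, h.sum_eq]
  rw [unionOn, biUnion_congr rfl hmatch]
  exact E.rightLinkage I (suppF w) hcard

theorem exists_common_leaf (h : IsNablaFamily E I w t) {c : Fin d} (hc : 2 ≤ w c) :
    ∃ a ∈ I, ∀ j ∈ suppF w, t j a = c := by
  have hcS : c ∈ suppF w := mem_suppF.2 (by omega)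
  have hfiber : 0 < posOn I (t c) c := by
    rw [h.posOn_eq c hcS, sub_unitVec_apply, if_pos rfl]
    omega
  obtain ⟨a, ha⟩ := card_pos.1 hfiber
  obtain ⟨haI, hac⟩ := mem_filter.1 ha
  refine ⟨a, haI, fun j hj => apply_eq_of_compatible (h.compatible c hcS j hj) (fun y hy => ?_)
    haI hac⟩
  rw [h.posOn_eq j hj, h.posOn_eq c hcS, sub_unitVec_apply, sub_unitVec_apply, if_neg hy]
  omega

theorem erase (h : IsNablaFamily E I w t) {c : Fin d} (hc : 2 ≤ w c) {a : Fin n} (ha : a ∈ I)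
    (hleaf : ∀ j ∈ suppF w, t j a = c) : IsNablaFamily E (I.erase a) (w - unitVec c) t := by
  have hsupp := suppF_sub_unitVec_of_two_le hc
  have hsub : ∀ f : Fin n → Fin d, restGraph (I.erase a) f ⊆ restGraph I f :=
    restGraph_mono (erase_subset a I)
  refine ⟨?_, fun j hj => ?_, fun j hj k hk => ?_, fun j hj I' J' hcard => ?_⟩
  · have hsum := sum_sub_unitVec (c := c) (w := w) (by omega)
    have hI : 0 < I.card := card_pos.2 ⟨a, ha⟩
    rw [card_erase_of_mem ha]
    linarith [h.sum_eq, Nat.sub_add_cancel hI]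
  · rw [hsupp] at hj
    rw [posOn_erase ha, h.posOn_eq j hj, hleaf j hj, tsub_right_comm]
  · rw [hsupp] at hj hk
    exact (h.compatible j hj k hk).mono (hsub _) (hsub _)
  · rw [hsupp] at hj
    exact (h.compatible_ensemble j hj I' J' hcard).mono (hsub _) subset_rfl

theorem isTreeOn_unionOn (h : IsNablaFamily E I w t) :
    IsTreeOn (unionOn I t (suppF w)) I (suppF w) ∧
      ∀ i ∈ I, 1 ≤ LD (unionOn I t (suppF w)) i ∧ LD (unionOn I t (suppF w)) i ≤ 2 := by
  induction I using Finset.strongInduction generalizing w with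
  | H I ih =>
  by_cases hw : ∀ y, w y ≤ 1
  · obtain ⟨htree, hdeg⟩ := h.isTreeOn_of_le_one hw
    exact ⟨htree, fun i hi => by simp [hdeg i hi]⟩
  push Not at hw
  obtain ⟨c, hc⟩ := hw
  obtain ⟨a, ha, hleaf⟩ := h.exists_common_leaf hc
  obtain ⟨htree, hdeg⟩ := ih _ (erase_ssubset ha) (h.erase hc ha hleaf)
  rw [suppF_sub_unitVec_of_two_le hc] at htree hdeg
  have hcS : c ∈ suppF w := mem_suppF.2 (by omega)
  have hfresh : ∀ e ∈ unionOn (I.erase a) t (suppF w), e.1 ≠ a :=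
    fun e he => (mem_erase.1 (htree.1 e he).1).1
  rw [unionOn_eq_insert ⟨c, hcS⟩ ha hleaf]
  have hleaf_tree := htree.insert_leaf (notMem_erase a I) hcS
  rw [insert_erase ha] at hleaf_tree
  refine ⟨hleaf_tree, fun i hi => ?_⟩
  rcases eq_or_ne i a with rfl | hia
  · rw [LD_insert_self c hfresh]
    omega
  · rw [LD_insert_of_ne c hia]
    exact hdeg i (mem_erase.2 ⟨hia, hi⟩)

end IsNablaFamily

end Nabla

theorem statement4 {n d : ℕ} (E : MatchingEnsemble n d)
    (T : (Fin d → ℕ) → Fin n → Fin d)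
    (hpos : ∀ v : Fin d → ℕ, (∑ j, v j) = n → topePos (T v) = v)
    (hcompat : ∀ v v' : Fin d → ℕ, (∑ j, v j) = n → (∑ j, v' j) = n →
      Compatible (topeGraph (T v)) (topeGraph (T v')))
    (hME : ∀ v : Fin d → ℕ, (∑ j, v j) = n →
      ∀ (I : Finset (Fin n)) (J : Finset (Fin d)), I.card = J.card →
        Compatible (topeGraph (T v)) (E.M I J))
    (w : Fin d → ℕ) (hw : (∑ j, w j) = n + 1) :
    IsTreeOn (nablaUnion T w) Finset.univ (suppF w) ∧
      ∀ i : Fin n, 1 ≤ LD (nablaUnion T w) i ∧ LD (nablaUnion T w) i ≤ 2 := by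
  have hsum : ∀ j ∈ suppF w, ∑ y, (w - unitVec j) y = n := fun j hj => by
    have := sum_sub_unitVec (mem_suppF.1 hj)
    omega
  have hfamily : IsNablaFamily E univ w fun j => T (w - unitVec j) :=
    { sum_eq := by rwa [card_univ, Fintype.card_fin]
      posOn_eq := fun j hj => hpos _ (hsum j hj)
      compatible := fun j hj k hk => hcompat _ _ (hsum j hj) (hsum k hk)
      compatible_ensemble := fun j hj => hME _ (hsum j hj) }
  obtain ⟨htree, hdeg⟩ := hfamily.isTreeOn_unionOn
  exact ⟨htree, fun i => hdeg i (mem_univ i)⟩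
end

section
/- Let 𝒯 = {T_v} be an (n,d)-pre-trianguloid and for a lattice point u of (n−1)Δ^{d−1} set 𝕋(u) = ⋃_{j̄∈[d̄]} T_{u+e_j̄}. Let m ≥ 1 with n − m ≥ 0, let s be a lattice point of (n−m)Δ^{d−1}, and let P be the set of lattice points u of (n−1)Δ^{d−1} with u_j̄ ≥ s_j̄ for all j̄ ∈ [d̄]. Then ⋃_{u∈P} 𝕋(u) = ⋃_{j̄∈[d̄]} T_{s+m·e_j̄}, this union is a connected graph, and its right degree vector equals s + m·(1,…,1). -/
open Finset

/-- The union `𝕋(u)` of the topes at the vertices of the unit simplex `u + Δ^{d-1}`. -/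
def deltaUnion {n d : ℕ} (T : (Fin d → ℕ) → Fin n → Fin d) (u : Fin d → ℕ) :
    BGraph (Fin n) (Fin d) :=
  Finset.univ.biUnion fun j => topeGraph (T (u + unitVec j))

/-- The union of the topes at the `d` corners `s + m·e_j` of `s + mΔ^{d-1}`. -/
def cornerUnion {n d : ℕ} (T : (Fin d → ℕ) → Fin n → Fin d) (s : Fin d → ℕ) (m : ℕ) :
    BGraph (Fin n) (Fin d) :=
  Finset.univ.biUnion fun j => topeGraph (T fun k => s k + if k = j then m else 0)

/-!
Iterating the sector axiom shows that if `T_v(i) = j` and `w` is obtained from `v` by moving mass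
into the coordinate `j`, then `T_w(i) = j`. Hence every edge `(i, j)` of a tope `T_u` with `u ≥ s`
already lies in the corner tope `T_{s + m e_j}`; conversely `T_{s + m e_j}` is one of the topes of
`𝕋(s + (m - 1) e_j)`. So the right degree of `j` in the union is that of `T_{s + m e_j}`, namely
`s_j + m`. For connectedness, let `D` be a set of right vertices forming a connected component
together with some left vertices `I`: every corner tope maps exactly `I` into `D`, so every corner
`s + m e_k` has the same weight `|I|` on `D`. That weight is `∑_D s + m` or `∑_D s` according as
`k ∈ D`, so, as `m ≥ 1`, `D` contains either all right vertices or none.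
-/

section

variable {n d : ℕ}

lemma sum_unitVec (j : Fin d) : ∑ k, unitVec j k = 1 := by
  simp [unitVec]

lemma sum_add_unitVec (u : Fin d → ℕ) (j : Fin d) :
    ∑ k, (u + unitVec j) k = ∑ k, u k + 1 := by
  simp only [Pi.add_apply, Finset.sum_add_distrib, sum_unitVec]

lemma mem_topeGraph {T : Fin n → Fin d} {i : Fin n} {j : Fin d} :
    (i, j) ∈ topeGraph T ↔ T i = j := by
  simp [topeGraph, eq_comm]

lemma card_filter_mem_eq_sum_topePos (T : Fin n → Fin d) (D : Finset (Fin d)) :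
    #{i | T i ∈ D} = ∑ k ∈ D, topePos T k := by
  rw [card_eq_sum_card_fiberwise (s := {i | T i ∈ D}) (t := D) fun i hi => (mem_filter.mp hi).2]
  refine sum_congr rfl fun k hk => congrArg card ?_
  ext i
  simp only [mem_filter, mem_univ, true_and, and_iff_right_iff_imp]
  rintro rfl
  exact hk

lemma RD_eq_card_filter {α β : Type*} [Fintype α] [DecidableEq α] [DecidableEq β]
    (G : BGraph α β) (b : β) : RD G b = #{a | (a, b) ∈ G} := by
  have hfiber : G.filter (·.2 = b) = ({a | (a, b) ∈ G} : Finset α).image (·, b) := by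
    ext ⟨a, b'⟩
    simp only [mem_filter, mem_image, mem_univ, true_and, Prod.mk.injEq]
    constructor
    · rintro ⟨h, rfl⟩
      exact ⟨a, h, rfl, rfl⟩
    · rintro ⟨a, h, rfl, rfl⟩
      exact ⟨h, rfl⟩
  rw [RD, hfiber, card_image_of_injective _ (Prod.mk_left_injective b)]

lemma toGraph_adj_inl_inr {α β : Type*} [DecidableEq α] [DecidableEq β] {G : BGraph α β}
    {a : α} {b : β} (h : (a, b) ∈ G) : (toGraph G).Adj (Sum.inl a) (Sum.inr b) :=
  (SimpleGraph.fromRel_adj _ _ _).mpr ⟨Sum.inl_ne_inr, Or.inl ⟨a, b, rfl, rfl, h⟩⟩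

def corner (s : Fin d → ℕ) (m : ℕ) (j : Fin d) : Fin d → ℕ :=
  fun k => s k + if k = j then m else 0

lemma corner_self (s : Fin d → ℕ) (m : ℕ) (j : Fin d) : corner s m j j = s j + m := by
  simp [corner]

lemma corner_of_ne (s : Fin d → ℕ) (m : ℕ) {j k : Fin d} (h : k ≠ j) :
    corner s m j k = s k := by
  simp [corner, h]

lemma le_corner (s : Fin d → ℕ) (m : ℕ) (j k : Fin d) : s k ≤ corner s m j k :=
  Nat.le_add_right _ _

lemma corner_succ (s : Fin d → ℕ) (m : ℕ) (j : Fin d) :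
    corner s (m + 1) j = corner s m j + unitVec j := by
  ext k
  by_cases h : k = j <;> simp [corner, unitVec, h, add_assoc]

lemma sum_corner_eq_sum_add_ite (s : Fin d → ℕ) (m : ℕ) (j : Fin d) (D : Finset (Fin d)) :
    ∑ k ∈ D, corner s m j k = ∑ k ∈ D, s k + if j ∈ D then m else 0 := by
  simp [corner, sum_add_distrib, sum_ite_eq']

lemma sum_corner (s : Fin d → ℕ) (m : ℕ) (j : Fin d) :
    ∑ k, corner s m j k = ∑ k, s k + m := by
  simp [sum_corner_eq_sum_add_ite]

/-- The combinatorial sector axiom; `T` is defined on all of `ℕ^d`, but only its values on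
`nΔ^{d-1}` enter. -/
def SectorAxiom (T : (Fin d → ℕ) → Fin n → Fin d) : Prop :=
  ∀ (u : Fin d → ℕ) (j j' : Fin d), (∑ k, u k) + 1 = n →
    ∀ i, T (u + unitVec j') i = j → T (u + unitVec j) i = j

variable {T : (Fin d → ℕ) → Fin n → Fin d}

lemma SectorAxiom.apply_eq_of_forall_ne_le (hT : SectorAxiom T) {v w : Fin d → ℕ}
    (hv : ∑ k, v k = n) (hw : ∑ k, w k = n) {j : Fin d} (hle : ∀ k ≠ j, w k ≤ v k) {i : Fin n}
    (hi : T v i = j) : T w i = j := by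
  obtain ⟨N, hN⟩ : ∃ N, w j - v j = N := ⟨_, rfl⟩
  induction N generalizing v with
  | zero =>
    have hwv : ∀ k ∈ univ, w k ≤ v k := fun k _ => by
      by_cases hk : k = j
      · subst hk; omega
      · exact hle k hk
    obtain rfl : w = v := funext fun k => ((sum_eq_sum_iff_of_le hwv).mp (hw.trans hv.symm)) k
      (mem_univ k)
    exact hi
  | succ N ih =>
    -- move one unit of mass from a coordinate `k` where `v` exceeds `w` into `j`
    obtain ⟨k, hk⟩ : ∃ k, w k < v k := by
      by_contra! hvw
      have := (sum_eq_sum_iff_of_le fun k _ => hvw k).mp (hv.trans hw.symm) j (mem_univ j)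
      omega
    have hkj : k ≠ j := by rintro rfl; omega
    set u := v - unitVec k
    have hu : u + unitVec k = v := tsub_add_cancel_of_le fun l => by
      simp only [unitVec]
      split_ifs with hl
      · subst hl; omega
      · exact Nat.zero_le _
    have husum : ∑ l, u l + 1 = n := by rw [← sum_add_unitVec, hu, hv]
    refine ih (v := u + unitVec j) (by rw [sum_add_unitVec, husum]) (fun l hl => ?_)
      (hT u j k husum i (hu ▸ hi)) ?_
    · have hvl := congrFun hu l
      have := hle l hl
      simp only [Pi.add_apply, unitVec, if_neg hl, add_zero] at hvl ⊢
      split_ifs at hvl with hlk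
      · subst hlk; omega
      · omega
    · have hvj := congrFun hu j
      simp only [Pi.add_apply, unitVec, if_neg hkj.symm, if_true, add_zero] at hvj ⊢
      omega

variable {s : Fin d → ℕ} {m : ℕ}

lemma SectorAxiom.apply_corner_eq (hT : SectorAxiom T) (hs : ∑ k, s k + m = n) {u : Fin d → ℕ}
    (hu : ∑ k, u k = n) (hsu : ∀ k, s k ≤ u k) {i : Fin n} {j : Fin d} (hi : T u i = j) :
    T (corner s m j) i = j :=
  hT.apply_eq_of_forall_ne_le hu (by rw [sum_corner, hs])
    (fun k hk => (corner_of_ne s m hk).trans_le (hsu k)) hi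

lemma SectorAxiom.mem_cornerUnion_iff (hT : SectorAxiom T) (hs : ∑ k, s k + m = n)
    {i : Fin n} {j : Fin d} : (i, j) ∈ cornerUnion T s m ↔ T (corner s m j) i = j := by
  refine ⟨fun h => ?_, fun h => mem_biUnion.mpr ⟨j, mem_univ j, mem_topeGraph.mpr h⟩⟩
  obtain ⟨k, -, hk⟩ := mem_biUnion.mp h
  exact hT.apply_corner_eq hs (by rw [sum_corner, hs]) (le_corner s m k) (mem_topeGraph.mp hk)

lemma SectorAxiom.deltaUnion_subset_cornerUnion (hT : SectorAxiom T) (hs : ∑ k, s k + m = n)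
    {u : Fin d → ℕ} (hu : ∑ k, u k + 1 = n) (hsu : ∀ k, s k ≤ u k) :
    deltaUnion T u ⊆ cornerUnion T s m := by
  intro e he
  obtain ⟨j', -, he⟩ := mem_biUnion.mp he
  obtain ⟨i, -, rfl⟩ := mem_image.mp he
  have hj := hT u _ j' hu i rfl
  refine (hT.mem_cornerUnion_iff hs).mpr (hT.apply_corner_eq hs ?_ (fun k => ?_) hj)
  · rw [sum_add_unitVec, hu]
  · exact (hsu k).trans (Nat.le_add_right _ _)

lemma topeGraph_corner_subset_deltaUnion (s : Fin d → ℕ) (m : ℕ) (j : Fin d) :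
    topeGraph (T (corner s (m + 1) j)) ⊆ deltaUnion T (corner s m j) := by
  rw [corner_succ]
  exact subset_biUnion_of_mem (fun k => topeGraph (T (corner s m j + unitVec k))) (mem_univ j)

lemma SectorAxiom.RD_cornerUnion (hT : SectorAxiom T)
    (hpos : ∀ v : Fin d → ℕ, ∑ k, v k = n → topePos (T v) = v) (hs : ∑ k, s k + m = n)
    (j : Fin d) : RD (cornerUnion T s m) j = s j + m := by
  simp only [RD_eq_card_filter, hT.mem_cornerUnion_iff hs]
  exact (congrFun (hpos (corner s m j) (by rw [sum_corner, hs])) j).trans (corner_self s m j)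

lemma reachable_inr_cornerUnion (hpos : ∀ v : Fin d → ℕ, ∑ k, v k = n → topePos (T v) = v)
    (hm : 1 ≤ m) (hs : ∑ k, s k + m = n) (j j' : Fin d) :
    (toGraph (cornerUnion T s m)).Reachable (Sum.inr j) (Sum.inr j') := by
  classical
  set G := toGraph (cornerUnion T s m)
  by_contra hjj'
  set D : Finset (Fin d) := {k | G.Reachable (Sum.inr j) (Sum.inr k)}
  have hadj (i : Fin n) (k : Fin d) : G.Adj (Sum.inl i) (Sum.inr (T (corner s m k) i)) :=
    toGraph_adj_inl_inr (mem_biUnion.mpr ⟨k, mem_univ k, mem_topeGraph.mpr rfl⟩)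
  -- each left vertex lies in the component of its image under any corner tope, so the
  -- corner topes all pull `D` back to the same set of left vertices
  have hweight (k : Fin d) :
      ∑ l ∈ D, corner s m k l = #{i | G.Reachable (Sum.inr j) (Sum.inl i)} := by
    rw [← hpos (corner s m k) (by rw [sum_corner, hs]), ← card_filter_mem_eq_sum_topePos]
    congr 1
    ext i
    simp only [D, mem_filter, mem_univ, true_and]
    exact ⟨fun h => h.trans (hadj i k).symm.reachable, fun h => h.trans (hadj i k).reachable⟩
  have := (hweight j).trans (hweight j').symm
  simp only [sum_corner_eq_sum_add_ite, D, mem_filter, mem_univ, true_and,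
    SimpleGraph.Reachable.rfl, hjj', if_true, if_false] at this
  omega

lemma reachable_cornerUnion (hpos : ∀ v : Fin d → ℕ, ∑ k, v k = n → topePos (T v) = v)
    (hm : 1 ≤ m) (hs : ∑ k, s k + m = n) (x y : Fin n ⊕ Fin d) :
    (toGraph (cornerUnion T s m)).Reachable x y := by
  have hright (z : Fin n ⊕ Fin d) :
      ∃ j, (toGraph (cornerUnion T s m)).Reachable z (Sum.inr j) := by
    rcases z with i | j
    · exact ⟨_, (toGraph_adj_inl_inr (mem_biUnion.mpr
        ⟨T 0 i, mem_univ _, mem_topeGraph.mpr rfl⟩)).reachable⟩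
    · exact ⟨j, .rfl⟩
  obtain ⟨j, hx⟩ := hright x
  obtain ⟨j', hy⟩ := hright y
  exact hx.trans ((reachable_inr_cornerUnion hpos hm hs j j').trans hy.symm)

end

theorem statement9 {n d : ℕ} (T : (Fin d → ℕ) → Fin n → Fin d)
    (hpos : ∀ v : Fin d → ℕ, (∑ j, v j) = n → topePos (T v) = v)
    (hsector : ∀ (u : Fin d → ℕ) (j j' : Fin d), (∑ k, u k) + 1 = n →
      ∀ i, T (u + unitVec j') i = j → T (u + unitVec j) i = j)
    (m : ℕ) (hm : 1 ≤ m) (s : Fin d → ℕ) (hs : (∑ j, s j) + m = n) :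
    (∀ u : Fin d → ℕ, (∑ j, u j) + 1 = n → (∀ j, s j ≤ u j) →
      deltaUnion T u ⊆ cornerUnion T s m) ∧
    (∀ e ∈ cornerUnion T s m, ∃ u : Fin d → ℕ,
      ((∑ j, u j) + 1 = n ∧ ∀ j, s j ≤ u j) ∧ e ∈ deltaUnion T u) ∧
    (∀ x y : Fin n ⊕ Fin d, (toGraph (cornerUnion T s m)).Reachable x y) ∧
    (∀ j, RD (cornerUnion T s m) j = s j + m) := by
  have hT : SectorAxiom T := hsector
  refine ⟨fun u hu hsu => hT.deltaUnion_subset_cornerUnion hs hu hsu, fun e he => ?_,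
    reachable_cornerUnion hpos hm hs, hT.RD_cornerUnion hpos hs⟩
  obtain ⟨m, rfl⟩ := Nat.exists_eq_add_of_le' hm
  obtain ⟨j, -, he⟩ := mem_biUnion.mp he
  exact ⟨corner s m j, ⟨by rw [sum_corner, ← hs, add_assoc], le_corner s m j⟩,
    topeGraph_corner_subset_deltaUnion s m j he⟩
end
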